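/- For every m×n real matrix B there exists y* ∈ Δ_m such that Σ_i y*_i B_{ij} ≥ val(B) for every column j ∈ {1,…,n}, and there exists z* ∈ Δ_n such that Σ_j B_{ij} z*_j ≤ val(B) for every row i ∈ {1,…,m}; i.e., each player possesses an optimal mixed strategy guaranteeing the value of the game against every pure strategy of the opponent. -/

import Mathlib

open scoped BigOperators

/-- Expected payoff to player 1 in the matrix game `B` when player 1 uses the
mixed strategy `y` and player 2 uses the mixed strategy `z`. -/
noncomputable def expectedPayoff {m n : ℕ} (B : Matrix (Fin m) (Fin n) ℝ)
    (y : Fin m → ℝ) (z : Fin n → ℝ) : ℝ :=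
  ∑ i, ∑ j, y i * B i j * z j

/-- The value (in mixed strategies) of the zero-sum matrix game `B`:
`val(B) = sup_{y ∈ Δ_m} inf_{z ∈ Δ_n} ∑_{i,j} y_i B_{ij} z_j`. -/
noncomputable def matrixGameValue {m n : ℕ} (B : Matrix (Fin m) (Fin n) ℝ) : ℝ :=
  ⨆ y : stdSimplex ℝ (Fin m), ⨅ z : stdSimplex ℝ (Fin n), expectedPayoff B y z

/-!
Ville's theorem of the alternative: for every `c`, either some mixed strategy `z` of player 2
keeps every row payoff `(B *ᵥ z) i` at most `c`, or some mixed strategy `y` of player 1 gets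
more than `c` against every column. It comes from separating the compact convex set
`(c - B) *ᵥ Δₙ` from the nonnegative orthant by a hyperplane: its normal is nonnegative, and
normalised it is the strategy `y`. With `c = val B` the second alternative would force
`val B > val B`, so player 2 has a strategy holding every row to `val B`; the alternative for
the game `-Bᵀ` gives player 1's strategy in the same way.
-/

open Matrix

section StdSimplex

variable {α ι : Type*} [Fintype ι]

theorem dotProduct_le_of_mem_stdSimplex {w v : ι → ℝ} (hw : w ∈ stdSimplex ℝ ι) {c : ℝ}
    (hv : ∀ i, v i ≤ c) : w ⬝ᵥ v ≤ c :=
  calc w ⬝ᵥ v ≤ w ⬝ᵥ fun _ => c := dotProduct_le_dotProduct_of_nonneg_left hv hw.1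
    _ = c := by simp [dotProduct, ← Finset.sum_mul, hw.2]

theorem le_dotProduct_of_mem_stdSimplex {w v : ι → ℝ} (hw : w ∈ stdSimplex ℝ ι) {c : ℝ}
    (hv : ∀ i, c ≤ v i) : c ≤ w ⬝ᵥ v :=
  calc c = w ⬝ᵥ fun _ => c := by simp [dotProduct, ← Finset.sum_mul, hw.2]
    _ ≤ w ⬝ᵥ v := dotProduct_le_dotProduct_of_nonneg_left hv hw.1

theorem inv_sum_smul_mem_stdSimplex {w : ι → ℝ} (hw : 0 ≤ w) (hsum : 0 < ∑ i, w i) :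
    (∑ i, w i)⁻¹ • w ∈ stdSimplex ℝ ι :=
  ⟨fun i => smul_nonneg (inv_nonneg.2 hsum.le) (hw i), by
    simp [← Finset.mul_sum, inv_mul_cancel₀ hsum.ne']⟩

theorem const_mulVec_of_mem_stdSimplex (c : ℝ) {w : ι → ℝ} (hw : w ∈ stdSimplex ℝ ι) :
    (of fun (_ : α) (_ : ι) => c) *ᵥ w = fun _ => c := by
  ext; simp [mulVec, dotProduct, ← Finset.mul_sum, hw.2]

theorem vecMul_const_of_mem_stdSimplex (c : ℝ) {w : ι → ℝ} (hw : w ∈ stdSimplex ℝ ι) :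
    w ᵥ* (of fun (_ : ι) (_ : α) => c) = fun _ => c := by
  ext; simp [vecMul, dotProduct, ← Finset.sum_mul, hw.2]

end StdSimplex

section Alternative

variable {ι κ : Type*} [Fintype ι] [Fintype κ]

theorem exists_stdSimplex_mulVec_nonneg_or_vecMul_neg [Nonempty κ] (B : Matrix ι κ ℝ) :
    (∃ z ∈ stdSimplex ℝ κ, 0 ≤ B *ᵥ z) ∨ ∃ y ∈ stdSimplex ℝ ι, ∀ j, (y ᵥ* B) j < 0 := by
  classical
  refine or_iff_not_imp_left.2 fun h => ?_
  obtain ⟨f, hf_nonneg, hf_neg⟩ := (ProperCone.positive ℝ (ι → ℝ)).hyperplane_separation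
    ((convex_stdSimplex ℝ κ).linear_image B.mulVecLin)
    ((isCompact_stdSimplex ℝ κ).image B.mulVecLin.continuous_of_finiteDimensional)
    (Set.disjoint_left.2 <| by
      rintro _ ⟨z, hz, rfl⟩ hBz
      exact h ⟨z, hz, hBz⟩)
  set w : ι → ℝ := fun i => f (Pi.single i 1)
  have hf : ∀ v, f v = w ⬝ᵥ v := fun v => by
    conv_lhs => rw [pi_eq_sum_univ' v]
    simp [w, dotProduct, mul_comm]
  have hw : 0 ≤ w := fun i => hf_nonneg _ (Pi.single_nonneg.2 zero_le_one)
  have hwB : ∀ j, (w ᵥ* B) j < 0 := fun j => by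
    have := hf_neg _ ⟨_, single_mem_stdSimplex ℝ j, rfl⟩
    rwa [mulVecLin_apply, hf, dotProduct_mulVec, dotProduct_single, mul_one] at this
  have hsum : 0 < ∑ i, w i := by
    obtain ⟨j⟩ := ‹Nonempty κ›
    refine (Fintype.sum_nonneg hw).lt_of_ne fun hzero => (hwB j).ne ?_
    simp [(Fintype.sum_eq_zero_iff_of_nonneg hw).1 hzero.symm]
  refine ⟨_, inv_sum_smul_mem_stdSimplex hw hsum, fun j => ?_⟩
  rw [smul_vecMul, Pi.smul_apply, smul_eq_mul]
  exact mul_neg_of_pos_of_neg (inv_pos.2 hsum) (hwB j)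

theorem exists_stdSimplex_mulVec_le_or_lt_vecMul [Nonempty κ] (B : Matrix ι κ ℝ) (c : ℝ) :
    (∃ z ∈ stdSimplex ℝ κ, ∀ i, (B *ᵥ z) i ≤ c) ∨ ∃ y ∈ stdSimplex ℝ ι, ∀ j, c < (y ᵥ* B) j := by
  obtain ⟨z, hz, h⟩ | ⟨y, hy, h⟩ :=
    exists_stdSimplex_mulVec_nonneg_or_vecMul_neg ((of fun _ _ => c) - B)
  · refine .inl ⟨z, hz, fun i => ?_⟩
    simpa [sub_mulVec, const_mulVec_of_mem_stdSimplex c hz] using h i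
  · refine .inr ⟨y, hy, fun j => ?_⟩
    simpa [vecMul_sub, vecMul_const_of_mem_stdSimplex c hy] using h j

theorem exists_stdSimplex_le_vecMul_or_mulVec_lt [Nonempty ι] (B : Matrix ι κ ℝ) (c : ℝ) :
    (∃ y ∈ stdSimplex ℝ ι, ∀ j, c ≤ (y ᵥ* B) j) ∨ ∃ z ∈ stdSimplex ℝ κ, ∀ i, (B *ᵥ z) i < c := by
  simpa [neg_mulVec, vecMul_neg, mulVec_transpose, vecMul_transpose] using
    exists_stdSimplex_mulVec_le_or_lt_vecMul (-Bᵀ) (-c)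

end Alternative

section Value

variable {m n : ℕ} (B : Matrix (Fin m) (Fin n) ℝ)

theorem expectedPayoff_eq_dotProduct_mulVec (y : Fin m → ℝ) (z : Fin n → ℝ) :
    expectedPayoff B y z = y ⬝ᵥ (B *ᵥ z) := by
  rw [dot_mulVec_eq_sum_sum, Finset.sum_comm]
  rfl

theorem expectedPayoff_eq_vecMul_dotProduct (y : Fin m → ℝ) (z : Fin n → ℝ) :
    expectedPayoff B y z = (y ᵥ* B) ⬝ᵥ z := by
  rw [expectedPayoff_eq_dotProduct_mulVec, dotProduct_mulVec]

theorem bddBelow_range_expectedPayoff (y : Fin m → ℝ) :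
    BddBelow (Set.range fun z : stdSimplex ℝ (Fin n) => expectedPayoff B y z) := by
  obtain ⟨c, hc⟩ := (Set.finite_range (y ᵥ* B)).bddBelow
  refine ⟨c, Set.forall_mem_range.2 fun z => ?_⟩
  rw [expectedPayoff_eq_vecMul_dotProduct, dotProduct_comm]
  exact le_dotProduct_of_mem_stdSimplex z.2 fun j => hc ⟨j, rfl⟩

theorem iInf_expectedPayoff_le {y : Fin m → ℝ} (hy : y ∈ stdSimplex ℝ (Fin m))
    {z : Fin n → ℝ} (hz : z ∈ stdSimplex ℝ (Fin n)) {c : ℝ} (h : ∀ i, (B *ᵥ z) i ≤ c) :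
    ⨅ z : stdSimplex ℝ (Fin n), expectedPayoff B y z ≤ c := by
  refine ciInf_le_of_le (bddBelow_range_expectedPayoff B y) ⟨z, hz⟩ ?_
  rw [expectedPayoff_eq_dotProduct_mulVec]
  exact dotProduct_le_of_mem_stdSimplex hy h

theorem matrixGameValue_le_of_mulVec_le [NeZero m] {z : Fin n → ℝ}
    (hz : z ∈ stdSimplex ℝ (Fin n)) {c : ℝ} (h : ∀ i, (B *ᵥ z) i ≤ c) :
    matrixGameValue B ≤ c :=
  ciSup_le fun y => iInf_expectedPayoff_le B y.2 hz h

theorem matrixGameValue_lt_of_mulVec_lt [NeZero m] {z : Fin n → ℝ}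
    (hz : z ∈ stdSimplex ℝ (Fin n)) {c : ℝ} (h : ∀ i, (B *ᵥ z) i < c) :
    matrixGameValue B < c := by
  obtain ⟨i₀, hi₀⟩ := Finite.exists_max (B *ᵥ z)
  exact (matrixGameValue_le_of_mulVec_le B hz hi₀).trans_lt (h i₀)

theorem le_matrixGameValue_of_le_vecMul [NeZero n] {y : Fin m → ℝ}
    (hy : y ∈ stdSimplex ℝ (Fin m)) {c : ℝ} (h : ∀ j, c ≤ (y ᵥ* B) j) :
    c ≤ matrixGameValue B := by
  have hbdd : BddAbove (Set.range fun y : stdSimplex ℝ (Fin m) =>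
      ⨅ z : stdSimplex ℝ (Fin n), expectedPayoff B y z) := by
    obtain ⟨d, hd⟩ := (Set.finite_range (B *ᵥ Pi.single 0 1)).bddAbove
    exact ⟨d, Set.forall_mem_range.2 fun y =>
      iInf_expectedPayoff_le B y.2 (single_mem_stdSimplex ℝ 0) fun i => hd ⟨i, rfl⟩⟩
  refine le_ciSup_of_le hbdd ⟨y, hy⟩ (le_ciInf fun z => ?_)
  rw [expectedPayoff_eq_vecMul_dotProduct, dotProduct_comm]
  exact le_dotProduct_of_mem_stdSimplex z.2 h

theorem lt_matrixGameValue_of_lt_vecMul [NeZero n] {y : Fin m → ℝ}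
    (hy : y ∈ stdSimplex ℝ (Fin m)) {c : ℝ} (h : ∀ j, c < (y ᵥ* B) j) :
    c < matrixGameValue B := by
  obtain ⟨j₀, hj₀⟩ := Finite.exists_min (y ᵥ* B)
  exact (h j₀).trans_le (le_matrixGameValue_of_le_vecMul B hy hj₀)

end Value

/-- **Existence of optimal mixed strategies.** For every `m × n` real matrix
`B` there is `y* ∈ Δ_m` with `∑ i, y*_i B_{ij} ≥ val(B)` against every pure
column `j`, and there is `z* ∈ Δ_n` with `∑ j, B_{ij} z*_j ≤ val(B)` against
every pure row `i`. -/
theorem matrix_game_exists_optimal_strategies (m n : ℕ) (hm : 0 < m) (hn : 0 < n)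
    (B : Matrix (Fin m) (Fin n) ℝ) :
    (∃ ystar ∈ stdSimplex ℝ (Fin m),
      ∀ j : Fin n, matrixGameValue B ≤ ∑ i, ystar i * B i j) ∧
    (∃ zstar ∈ stdSimplex ℝ (Fin n),
      ∀ i : Fin m, ∑ j, B i j * zstar j ≤ matrixGameValue B) := by
  have : NeZero m := ⟨hm.ne'⟩
  have : NeZero n := ⟨hn.ne'⟩
  constructor
  · obtain ⟨y, hy, h⟩ | ⟨z, hz, h⟩ :=
      exists_stdSimplex_le_vecMul_or_mulVec_lt B (matrixGameValue B)
    · exact ⟨y, hy, h⟩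
    · exact absurd (matrixGameValue_lt_of_mulVec_lt B hz h) (lt_irrefl _)
  · obtain ⟨z, hz, h⟩ | ⟨y, hy, h⟩ :=
      exists_stdSimplex_mulVec_le_or_lt_vecMul B (matrixGameValue B)
    · exact ⟨z, hz, h⟩
    · exact absurd (lt_matrixGameValue_of_lt_vecMul B hy h) (lt_irrefl _)
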